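/- arXiv:2504.17348 — 2 statements merged into one kernel-verified Lean document; each statement's English description precedes it below -/
import Mathlib

section
/- Let F be an algebraically closed field and let A be an n×n matrix over F whose minimal polynomial has degree d with 2d ≤ n ≤ 3d − 1. Then there exists an eigenvalue λ of A such that, writing a for the multiplicity of λ as a root of the minimal polynomial of A, one has 1 ≤ rank((A − λ·I)^{a−1}) − rank((A − λ·I)^{a}) ≤ 2 (i.e., λ has at most two Jordan blocks of maximal size). -/
/-!
For `g = f - μ • 1`, the dimension of `range (g ^ k) ⊓ ker g` is the number of Jordan blocks of `μ`
of size `> k`. It is antitone in `k` and these dimensions sum over `k < a` to `dim ker (g ^ a)`, so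
if `μ` has at least three Jordan blocks of the maximal size `a` (its multiplicity in the minimal
polynomial), then `dim ker (g ^ a) ≥ 3 a`. Since `dim ker (g ^ a)` is at most the multiplicity of `μ`
in the characteristic polynomial, this for every eigenvalue would give `n ≥ 3 d`.
-/

open Polynomial Matrix Module

theorem Submodule.finrank_map_add_finrank_inf_ker {K V W : Type*} [Field K] [AddCommGroup V]
    [Module K V] [AddCommGroup W] [Module K W] (p : Submodule K V) [FiniteDimensional K p]
    (f : V →ₗ[K] W) :
    finrank K (p.map f) + finrank K ↥(p ⊓ LinearMap.ker f) = finrank K p := by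
  have hker : (LinearMap.ker f).comap p.subtype = (p ⊓ LinearMap.ker f).comap p.subtype := by
    rw [Submodule.comap_inf, Submodule.comap_subtype_self, top_inf_eq]
  rw [← LinearMap.finrank_range_add_finrank_ker (f.domRestrict p), LinearMap.range_domRestrict,
    LinearMap.ker_domRestrict, hker,
    (Submodule.comapSubtypeEquivOfLe inf_le_left).finrank_eq]

namespace Module.End

variable {K V : Type*} [Field K] [AddCommGroup V] [Module K V] [FiniteDimensional K V]

theorem finrank_range_pow_succ_add_finrank_inf_ker (f : End K V) (k : ℕ) :
    finrank K (LinearMap.range (f ^ (k + 1))) +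
        finrank K ↥(LinearMap.range (f ^ k) ⊓ LinearMap.ker f) =
      finrank K (LinearMap.range (f ^ k)) := by
  rw [pow_succ', mul_eq_comp, LinearMap.range_comp,
    Submodule.finrank_map_add_finrank_inf_ker]

theorem finrank_ker_pow_eq_sum_finrank_inf_ker (f : End K V) (a : ℕ) :
    finrank K (LinearMap.ker (f ^ a)) =
      ∑ k ∈ Finset.range a, finrank K ↥(LinearMap.range (f ^ k) ⊓ LinearMap.ker f) := by
  induction a with
  | zero => simp [one_eq_id]
  | succ a ih =>
    have hsucc := f.finrank_range_pow_succ_add_finrank_inf_ker a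
    have ha := LinearMap.finrank_range_add_finrank_ker (f ^ a)
    have ha' := LinearMap.finrank_range_add_finrank_ker (f ^ (a + 1))
    rw [Finset.sum_range_succ, ← ih]
    omega

theorem mul_finrank_range_pow_pred_inf_ker_le (f : End K V) (a : ℕ) :
    a * finrank K ↥(LinearMap.range (f ^ (a - 1)) ⊓ LinearMap.ker f) ≤
      finrank K (LinearMap.ker (f ^ a)) := by
  have hanti : ∀ k ∈ Finset.range a, LinearMap.range (f ^ (a - 1)) ≤ LinearMap.range (f ^ k) :=
    fun k hk => f.iterateRange.monotone (Nat.le_pred_of_lt (Finset.mem_range.mp hk))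
  rw [finrank_ker_pow_eq_sum_finrank_inf_ker]
  simpa using Finset.card_nsmul_le_sum (Finset.range a)
    (fun k => finrank K ↥(LinearMap.range (f ^ k) ⊓ LinearMap.ker f)) _
    fun k hk => Submodule.finrank_mono (inf_le_inf_right _ (hanti k hk))

theorem range_pow_rootMultiplicity_pred_inf_ker_ne_bot (f : End K V) {μ : K}
    (hμ : (minpoly K f).IsRoot μ) :
    LinearMap.range ((f - μ • 1) ^ ((minpoly K f).rootMultiplicity μ - 1)) ⊓
      LinearMap.ker (f - μ • 1) ≠ ⊥ := by
  have hP0 : minpoly K f ≠ 0 := minpoly.ne_zero (Algebra.IsIntegral.isIntegral f)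
  obtain ⟨c, hc, -⟩ := (minpoly K f).exists_eq_pow_rootMultiplicity_mul_and_not_dvd hP0 μ
  set a := (minpoly K f).rootMultiplicity μ
  have ha : 0 < a := (rootMultiplicity_pos hP0).mpr hμ
  -- With `minpoly = (X - μ) ^ a * c`, the witness is `(f - μ) ^ (a - 1) (c(f) v)` for a `v` on
  -- which `(X - μ) ^ (a - 1) * c`, of degree below that of `minpoly`, does not vanish.
  have hX : aeval f (X - C μ) = f - μ • 1 := by
    rw [map_sub, aeval_X, aeval_C, Algebra.algebraMap_eq_smul_one]
  have hp : aeval f ((X - C μ) ^ (a - 1) * c) ≠ 0 := by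
    intro h
    have hdvd := minpoly.dvd K f h
    rw [hc, mul_dvd_mul_iff_right fun hc0 => hP0 (by rw [hc, hc0, mul_zero]),
      pow_dvd_pow_iff (X_sub_C_ne_zero μ) (not_isUnit_X_sub_C μ)] at hdvd
    omega
  obtain ⟨v, hv⟩ : ∃ v, aeval f ((X - C μ) ^ (a - 1) * c) v ≠ 0 := by
    by_contra! h
    exact hp (LinearMap.ext h)
  rw [map_mul, map_pow, hX] at hv
  refine Submodule.ne_bot_iff _ |>.mpr ⟨_, ⟨⟨_, rfl⟩, ?_⟩, hv⟩
  have hmin := congr($(minpoly.aeval K f) v)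
  rw [hc, map_mul, map_pow, hX, ← Nat.sub_add_cancel ha, pow_succ'] at hmin
  exact hmin

theorem nsmul_roots_minpoly_le_roots_charpoly (f : End K V) (m : ℕ)
    (h : ∀ μ, (minpoly K f).IsRoot μ →
      m ≤ finrank K ↥(LinearMap.range ((f - μ • 1) ^ ((minpoly K f).rootMultiplicity μ - 1)) ⊓
        LinearMap.ker (f - μ • 1))) :
    m • (minpoly K f).roots ≤ f.charpoly.roots := by
  classical
  refine Multiset.le_iff_count.mpr fun μ => ?_
  rw [Multiset.count_nsmul, count_roots, count_roots]
  by_cases hμ : (minpoly K f).IsRoot μ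
  · set a := (minpoly K f).rootMultiplicity μ
    calc m * a ≤ a * finrank K ↥(LinearMap.range ((f - μ • 1) ^ (a - 1)) ⊓
          LinearMap.ker (f - μ • 1)) := by rw [mul_comm]; exact Nat.mul_le_mul_left a (h μ hμ)
      _ ≤ finrank K (LinearMap.ker ((f - μ • 1) ^ a)) := mul_finrank_range_pow_pred_inf_ker_le _ a
      _ = finrank K (f.genEigenspace μ a) := by rw [genEigenspace_nat]
      _ ≤ f.charpoly.rootMultiplicity μ := LinearMap.finrank_genEigenspace_le f μ a
  · simp [rootMultiplicity_eq_zero hμ]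

theorem exists_eigenvalue_few_maximal_jordan_blocks (f : End K V) (hsplit : (minpoly K f).Splits)
    (m : ℕ) (hdim : finrank K V < (m + 1) * (minpoly K f).natDegree) :
    ∃ μ ∈ spectrum K f,
      finrank K (LinearMap.range ((f - μ • 1) ^ (minpoly K f).rootMultiplicity μ)) + 1 ≤
          finrank K (LinearMap.range ((f - μ • 1) ^ ((minpoly K f).rootMultiplicity μ - 1))) ∧
        finrank K (LinearMap.range ((f - μ • 1) ^ ((minpoly K f).rootMultiplicity μ - 1))) ≤
          finrank K (LinearMap.range ((f - μ • 1) ^ (minpoly K f).rootMultiplicity μ)) + m := by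
  by_contra! hfew
  have hroots : (m + 1) • (minpoly K f).roots ≤ f.charpoly.roots := by
    refine f.nsmul_roots_minpoly_le_roots_charpoly (m + 1) fun μ hμ => ?_
    have ha : 0 < (minpoly K f).rootMultiplicity μ :=
      (rootMultiplicity_pos (minpoly.ne_zero (Algebra.IsIntegral.isIntegral f))).mpr hμ
    have hpos :=
      Submodule.one_le_finrank_iff.mpr (f.range_pow_rootMultiplicity_pred_inf_ker_ne_bot hμ)
    have hstep := (f - μ • 1).finrank_range_pow_succ_add_finrank_inf_ker
      ((minpoly K f).rootMultiplicity μ - 1)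
    rw [Nat.sub_add_cancel ha] at hstep
    have := hfew μ (hasEigenvalue_iff_mem_spectrum.mp (hasEigenvalue_of_isRoot hμ)) (by omega)
    omega
  have hcard := Multiset.card_le_card hroots
  rw [Multiset.card_nsmul, splits_iff_card_roots.mp hsplit] at hcard
  have := f.charpoly.card_roots'
  rw [LinearMap.charpoly_natDegree] at this
  omega

end Module.End

theorem exists_eigenvalue_at_most_two_maximal_jordan_blocks_general
    (F : Type*) [Field F] [IsAlgClosed F] (n : ℕ)
    (A : Matrix (Fin n) (Fin n) F) (d : ℕ)
    (hd : (minpoly F A).natDegree = d) (h2 : n + 1 ≤ 3 * d) :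
    ∃ lam ∈ spectrum F A,
      Matrix.rank ((A - lam • (1 : Matrix (Fin n) (Fin n) F)) ^
            (minpoly F A).rootMultiplicity lam) + 1 ≤
          Matrix.rank ((A - lam • (1 : Matrix (Fin n) (Fin n) F)) ^
            ((minpoly F A).rootMultiplicity lam - 1)) ∧
        Matrix.rank ((A - lam • (1 : Matrix (Fin n) (Fin n) F)) ^
            ((minpoly F A).rootMultiplicity lam - 1)) ≤
          Matrix.rank ((A - lam • (1 : Matrix (Fin n) (Fin n) F)) ^
            (minpoly F A).rootMultiplicity lam) + 2 := by
  set f : Module.End F (Fin n → F) := Matrix.toLinAlgEquiv' A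
  have hminpoly : minpoly F f = minpoly F A := minpoly.algEquiv_eq _ A
  have hrank : ∀ (μ : F) (k : ℕ),
      ((A - μ • 1) ^ k).rank = finrank F (LinearMap.range ((f - μ • 1) ^ k)) := by
    intro μ k
    have hlin : ((A - μ • 1) ^ k).mulVecLin = (f - μ • 1) ^ k := by
      change Matrix.toLinAlgEquiv' _ = _
      rw [map_pow, map_sub, map_smul, map_one]
    rw [Matrix.rank, hlin]
  obtain ⟨μ, hμ, hlow, hhigh⟩ := Module.End.exists_eigenvalue_few_maximal_jordan_blocks f
    (IsAlgClosed.splits _) 2 (by rw [Module.finrank_fin_fun, hminpoly, hd]; omega)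
  refine ⟨μ, AlgEquiv.spectrum_eq (Matrix.toLinAlgEquiv' (R := F)) A ▸ hμ, ?_⟩
  simp only [hrank, ← hminpoly]
  exact ⟨hlow, hhigh⟩

theorem exists_eigenvalue_at_most_two_maximal_jordan_blocks
    (F : Type*) [Field F] [IsAlgClosed F] (n : ℕ)
    (A : Matrix (Fin n) (Fin n) F) (d : ℕ)
    (hd : (minpoly F A).natDegree = d) (h1 : 2 * d ≤ n) (h2 : n + 1 ≤ 3 * d) :
    ∃ lam ∈ spectrum F A,
      Matrix.rank ((A - lam • (1 : Matrix (Fin n) (Fin n) F)) ^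
            (minpoly F A).rootMultiplicity lam) + 1 ≤
          Matrix.rank ((A - lam • (1 : Matrix (Fin n) (Fin n) F)) ^
            ((minpoly F A).rootMultiplicity lam - 1)) ∧
        Matrix.rank ((A - lam • (1 : Matrix (Fin n) (Fin n) F)) ^
            ((minpoly F A).rootMultiplicity lam - 1)) ≤
          Matrix.rank ((A - lam • (1 : Matrix (Fin n) (Fin n) F)) ^
            (minpoly F A).rootMultiplicity lam) + 2 :=
  exists_eigenvalue_at_most_two_maximal_jordan_blocks_general F n A d hd h2
end

section
/- Let F be a field, let k ≥ 1, and set n = 2k. Let J_k ∈ M_k(F) denote the nilpotent Jordan block of size k (the matrix with 1 in positions (i, i+1) for 1 ≤ i ≤ k − 1 and 0 elsewhere), and let A ∈ M_n(F) be the block-diagonal matrix J_k ⊕ J_k. If S is a finite generating system of M_n(F) that contains A, then 2·ℓ(S) ≤ 5n − 4 (i.e., ℓ(S) ≤ 5n/2 − 2). -/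
/-!
For `b ∈ S` the subspace `A b` is stable under left multiplication by `S`, so the chain
`L_i(S) + A b` grows strictly until it is all of `A`. If `b` is nilpotent then `1 ∉ A b`, so
already `L_0(S) + A b ≠ A b`, and hence `L_{d-1}(S) + A b = A` with `d = dim (A / A b)`.
Multiplying on the right by `b ^ ρ` gives `A b ^ ρ ⊆ L_{d-1+ρ}(S) + A b ^ (ρ+1)`, so `b ^ p = 0`
forces `L_{d+p-2}(S) = A`. For `b = J_k ⊕ J_k` in `M_{2k}(F)` we have `p = k`, and `A b` consists
of the matrices whose columns `1` and `k + 1` vanish, so `d = 4k` and `ℓ(S) ≤ 5k - 2`.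
-/

open Polynomial Matrix

/-- The `F`-linear span of all words over `S` of length at most `i`
(the empty word being `1`). -/
def wordSpan (F : Type*) {A : Type*} [Field F] [Ring A] [Algebra F A]
    (S : Set A) (i : ℕ) : Submodule F A :=
  Submodule.span F {x : A | ∃ l : List A, l.length ≤ i ∧ (∀ a ∈ l, a ∈ S) ∧ l.prod = x}

/-- `S` is a generating system of the algebra `A`:
`A` is the union of the subspaces `wordSpan F S i`. -/
def IsGeneratingSystem (F : Type*) {A : Type*} [Field F] [Ring A] [Algebra F A]
    (S : Set A) : Prop :=
  ∀ x : A, ∃ i : ℕ, x ∈ wordSpan F S i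

/-- The length of a generating system `S`: the least `k` with `wordSpan F S k = ⊤`. -/
noncomputable def genLength (F : Type*) {A : Type*} [Field F] [Ring A] [Algebra F A]
    (S : Set A) : ℕ :=
  sInf {k : ℕ | wordSpan F S k = ⊤}

/-- The nilpotent Jordan block of size `k`: ones on the superdiagonal, zeros elsewhere. -/
def nilJordanBlock (F : Type*) [Field F] (k : ℕ) : Matrix (Fin k) (Fin k) F :=
  Matrix.of fun i j => if (i : ℕ) + 1 = (j : ℕ) then 1 else 0

section WordSpan

variable {F A : Type*} [Field F] [Ring A] [Algebra F A] {S : Set A}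

lemma list_prod_mem_wordSpan {i : ℕ} {l : List A} (hl : l.length ≤ i) (hS : ∀ a ∈ l, a ∈ S) :
    l.prod ∈ wordSpan F S i :=
  Submodule.subset_span ⟨l, hl, hS, rfl⟩

lemma one_mem_wordSpan (i : ℕ) : (1 : A) ∈ wordSpan F S i :=
  list_prod_mem_wordSpan (l := []) (Nat.zero_le i) (by simp)

lemma mem_wordSpan_one {s : A} (hs : s ∈ S) : s ∈ wordSpan F S 1 := by
  simpa using list_prod_mem_wordSpan (F := F) (l := [s]) le_rfl (by simpa)

lemma pow_mem_wordSpan {s : A} (hs : s ∈ S) (n : ℕ) : s ^ n ∈ wordSpan F S n := by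
  rw [← List.prod_replicate]
  exact list_prod_mem_wordSpan (by simp) fun a ha => List.eq_of_mem_replicate ha ▸ hs

lemma wordSpan_mono {i j : ℕ} (h : i ≤ j) : wordSpan F S i ≤ wordSpan F S j :=
  Submodule.span_mono fun _ ⟨l, hl, hS, hx⟩ => ⟨l, hl.trans h, hS, hx⟩

lemma mul_mem_wordSpan {i j : ℕ} {x y : A} (hx : x ∈ wordSpan F S i)
    (hy : y ∈ wordSpan F S j) : x * y ∈ wordSpan F S (i + j) := by
  induction hx using Submodule.span_induction with
  | mem x hx =>
    induction hy using Submodule.span_induction with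
    | mem y hy =>
      obtain ⟨l₁, hl₁, hS₁, rfl⟩ := hx
      obtain ⟨l₂, hl₂, hS₂, rfl⟩ := hy
      rw [← List.prod_append]
      refine list_prod_mem_wordSpan (by rw [List.length_append]; omega) fun a ha => ?_
      exact (List.mem_append.1 ha).elim (hS₁ a) (hS₂ a)
    | zero => simp
    | add y z _ _ hy hz => rw [mul_add]; exact add_mem hy hz
    | smul c y _ hy => rw [mul_smul_comm]; exact Submodule.smul_mem _ _ hy
  | zero => simp
  | add x z _ _ hx hz => rw [add_mul]; exact add_mem hx hz
  | smul c x _ hx => rw [smul_mul_assoc]; exact Submodule.smul_mem _ _ hx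

lemma wordSpan_le_of_mul_mem {U : Submodule F A} (h1 : (1 : A) ∈ U)
    (hU : ∀ s ∈ S, ∀ x ∈ U, s * x ∈ U) (i : ℕ) : wordSpan F S i ≤ U := by
  rw [wordSpan, Submodule.span_le]
  rintro _ ⟨l, -, hS, rfl⟩
  induction l with
  | nil => simpa using h1
  | cons a l ih =>
    rw [List.prod_cons]
    exact hU a (hS a (by simp)) _ (ih fun b hb => hS b (by simp [hb]))

lemma IsGeneratingSystem.eq_top_of_mul_mem (hS : IsGeneratingSystem F S) {U : Submodule F A}
    (h1 : (1 : A) ∈ U) (hU : ∀ s ∈ S, ∀ x ∈ U, s * x ∈ U) : U = ⊤ :=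
  eq_top_iff.2 fun x _ =>
    let ⟨i, hi⟩ := hS x
    wordSpan_le_of_mul_mem h1 hU i hi

lemma genLength_le_of_wordSpan_eq_top {i : ℕ} (h : wordSpan F S i = ⊤) : genLength F S ≤ i :=
  Nat.sInf_le h

end WordSpan

section LeftStable

variable {F A : Type*} [Field F] [Ring A] [Algebra F A] {S : Set A} {N : Submodule F A}

lemma wordSpan_sup_eq_top_of_succ_le (hS : IsGeneratingSystem F S)
    (hN : ∀ s ∈ S, ∀ x ∈ N, s * x ∈ N) {i : ℕ}
    (h : wordSpan F S (i + 1) ⊔ N ≤ wordSpan F S i ⊔ N) : wordSpan F S i ⊔ N = ⊤ := by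
  refine hS.eq_top_of_mul_mem (Submodule.mem_sup_left (one_mem_wordSpan i)) fun s hs x hx => ?_
  obtain ⟨y, hy, n, hn, rfl⟩ := Submodule.mem_sup.1 hx
  rw [mul_add]
  refine add_mem (h (Submodule.mem_sup_left ?_)) (Submodule.mem_sup_right (hN s hs n hn))
  exact Nat.add_comm 1 i ▸ mul_mem_wordSpan (mem_wordSpan_one hs) hy

variable [FiniteDimensional F A]

lemma wordSpan_sup_eq_top_or_finrank_le (hS : IsGeneratingSystem F S)
    (hN : ∀ s ∈ S, ∀ x ∈ N, s * x ∈ N) (h1 : (1 : A) ∉ N) (i : ℕ) :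
    wordSpan F S i ⊔ N = ⊤ ∨
      Module.finrank F N + i + 1 ≤ Module.finrank F ↥(wordSpan F S i ⊔ N) := by
  induction i with
  | zero =>
    refine .inr (Submodule.finrank_lt_finrank_of_lt (lt_of_le_of_ne le_sup_right fun h => h1 ?_))
    exact h ▸ Submodule.mem_sup_left (one_mem_wordSpan 0)
  | succ i ih =>
    by_cases h : wordSpan F S i ⊔ N = ⊤
    · exact .inl (eq_top_iff.2 (h ▸ sup_le_sup_right (wordSpan_mono i.le_succ) N))
    · have hlt : wordSpan F S i ⊔ N < wordSpan F S (i + 1) ⊔ N :=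
        lt_of_le_of_ne (sup_le_sup_right (wordSpan_mono i.le_succ) N)
          fun heq => h (wordSpan_sup_eq_top_of_succ_le hS hN heq.ge)
      have := Submodule.finrank_lt_finrank_of_lt hlt
      have := ih.resolve_left h
      exact .inr (by omega)

theorem wordSpan_finrank_quotient_sub_one_sup_eq_top (hS : IsGeneratingSystem F S)
    (hN : ∀ s ∈ S, ∀ x ∈ N, s * x ∈ N) (h1 : (1 : A) ∉ N) :
    wordSpan F S (Module.finrank F (A ⧸ N) - 1) ⊔ N = ⊤ := by
  refine (wordSpan_sup_eq_top_or_finrank_le hS hN h1 _).elim id fun hle =>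
    Submodule.eq_top_of_finrank_eq (le_antisymm (Submodule.finrank_le _) ?_)
  have hsum := N.finrank_quotient_add_finrank
  have hpos : 0 < Module.finrank F (A ⧸ N) :=
    Module.finrank_pos_iff_exists_ne_zero.2 ⟨N.mkQ 1, by simpa using h1⟩
  omega

end LeftStable

section Nilpotent

variable {F A : Type*} [Field F] [Ring A] [Algebra F A] {S : Set A}

lemma range_mulRight_pow_le_wordSpan_sup {b : A} (hb : b ∈ S) {m : ℕ}
    (h : wordSpan F S m ⊔ LinearMap.range (LinearMap.mulRight F b) = ⊤) (ρ : ℕ) :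
    LinearMap.range (LinearMap.mulRight F (b ^ ρ)) ≤
      wordSpan F S (m + ρ) ⊔ LinearMap.range (LinearMap.mulRight F (b ^ (ρ + 1))) := by
  rw [LinearMap.range_eq_map, ← h, Submodule.map_sup]
  refine sup_le_sup ?_ ?_
  · rintro _ ⟨x, hx, rfl⟩
    exact mul_mem_wordSpan hx (pow_mem_wordSpan hb ρ)
  · rintro _ ⟨_, ⟨x, rfl⟩, rfl⟩
    exact ⟨x, by simp [pow_succ', mul_assoc]⟩

theorem wordSpan_eq_top_of_pow_eq_zero [FiniteDimensional F A] [Nontrivial A]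
    (hS : IsGeneratingSystem F S) {b : A} (hb : b ∈ S) {p : ℕ} (hp : b ^ p = 0) :
    wordSpan F S
      (Module.finrank F (A ⧸ LinearMap.range (LinearMap.mulRight F b)) - 1 + (p - 1)) = ⊤ := by
  set N := LinearMap.range (LinearMap.mulRight F b)
  have h1 : (1 : A) ∉ N := by
    rintro ⟨x, hx⟩
    apply one_ne_zero (α := A)
    rw [← pow_mul_pow_eq_one p (by simpa using hx), hp, mul_zero]
  have hbase : wordSpan F S (Module.finrank F (A ⧸ N) - 1) ⊔ N = ⊤ :=
    wordSpan_finrank_quotient_sub_one_sup_eq_top hS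
      (fun s _ _ ⟨x, hx⟩ => ⟨s * x, by simp [← hx, mul_assoc]⟩) h1
  have key : ∀ ρ, wordSpan F S (Module.finrank F (A ⧸ N) - 1 + ρ) ⊔
      LinearMap.range (LinearMap.mulRight F (b ^ (ρ + 1))) = ⊤ := by
    intro ρ
    induction ρ with
    | zero => simpa using hbase
    | succ ρ ih =>
      refine eq_top_iff.2 (ih.ge.trans (sup_le (le_sup_of_le_left (wordSpan_mono (by omega))) ?_))
      exact range_mulRight_pow_le_wordSpan_sup hb hbase (ρ + 1)
  have hp0 : p ≠ 0 := by
    rintro rfl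
    exact one_ne_zero (pow_zero b ▸ hp)
  simpa [Nat.sub_add_cancel (Nat.one_le_iff_ne_zero.2 hp0), hp] using key (p - 1)

end Nilpotent

section DoubleNilJordanBlock

variable {F : Type*} [Field F] {k : ℕ}

def doubleNilJordanBlock (F : Type*) [Field F] (k : ℕ) : Matrix (Fin (2 * k)) (Fin (2 * k)) F :=
  reindex (finSumFinEquiv.trans (finCongr (two_mul k).symm))
    (finSumFinEquiv.trans (finCongr (two_mul k).symm))
    (fromBlocks (nilJordanBlock F k) 0 0 (nilJordanBlock F k))

lemma finSumFinEquiv_trans_finCongr_two_mul_symm_apply (a : Fin (2 * k)) :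
    (finSumFinEquiv.trans (finCongr (two_mul k).symm)).symm a =
      if h : (a : ℕ) < k then Sum.inl ⟨a, h⟩ else Sum.inr ⟨a - k, by omega⟩ := by
  rw [Equiv.symm_apply_eq]
  split_ifs
  · exact Fin.ext (by simp)
  · exact Fin.ext (by simp only [Equiv.trans_apply, finSumFinEquiv_apply_right, Fin.natAdd_eq_addNat,
      Fin.addNat_mk, finCongr_apply, Fin.cast_mk]; omega)

lemma doubleNilJordanBlock_apply (a b : Fin (2 * k)) :
    doubleNilJordanBlock F k a b = if (a : ℕ) + 1 = b ∧ (b : ℕ) ≠ k then 1 else 0 := by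
  rw [doubleNilJordanBlock, reindex_apply, submatrix_apply,
    finSumFinEquiv_trans_finCongr_two_mul_symm_apply,
    finSumFinEquiv_trans_finCongr_two_mul_symm_apply]
  split_ifs <;>
    simp only [fromBlocks_apply₁₁, fromBlocks_apply₁₂, fromBlocks_apply₂₁, fromBlocks_apply₂₂,
      nilJordanBlock, of_apply, Matrix.zero_apply] <;>
    first | omega | (split_ifs <;> first | rfl | omega)

lemma mul_doubleNilJordanBlock_apply (X : Matrix (Fin (2 * k)) (Fin (2 * k)) F)
    (a b : Fin (2 * k)) :
    (X * doubleNilJordanBlock F k) a b =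
      if (b : ℕ) ≠ 0 ∧ (b : ℕ) ≠ k then X a ⟨b - 1, by omega⟩ else 0 := by
  simp only [mul_apply, doubleNilJordanBlock_apply, mul_ite, mul_one, mul_zero]
  split_ifs
  · rw [Finset.sum_eq_single ⟨b - 1, by omega⟩ (fun e _ he => if_neg fun h' => he
      (Fin.ext (by dsimp only; omega))) (by simp), if_pos (by dsimp only; omega)]
  · exact Finset.sum_eq_zero fun e _ => if_neg (by omega)

lemma mul_doubleNilJordanBlock_pow_apply (X : Matrix (Fin (2 * k)) (Fin (2 * k)) F) (ρ : ℕ)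
    (a b : Fin (2 * k)) :
    (X * doubleNilJordanBlock F k ^ ρ) a b =
      if ρ ≤ b ∧ (b : ℕ) < k ∨ k + ρ ≤ b then X a ⟨b - ρ, by omega⟩ else 0 := by
  induction ρ generalizing b with
  | zero => simp
  | succ ρ ih =>
    rw [pow_succ, ← mul_assoc, mul_doubleNilJordanBlock_apply]
    split_ifs with h₁ h₂ h₂
    · rw [ih, if_pos (by dsimp only; omega)]
      congr 1
      exact Fin.ext (by dsimp only; omega)
    · rw [ih, if_neg (by dsimp only; omega)]
    · omega
    · rfl

lemma doubleNilJordanBlock_pow_self : doubleNilJordanBlock F k ^ k = 0 := by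
  ext a b
  rw [← one_mul (doubleNilJordanBlock F k ^ k), mul_doubleNilJordanBlock_pow_apply,
    if_neg (by omega), Matrix.zero_apply]

lemma mem_range_mulRight_doubleNilJordanBlock_iff (X : Matrix (Fin (2 * k)) (Fin (2 * k)) F) :
    X ∈ LinearMap.range (LinearMap.mulRight F (doubleNilJordanBlock F k)) ↔
      ∀ a b : Fin (2 * k), ((b : ℕ) = 0 ∨ (b : ℕ) = k) → X a b = 0 := by
  constructor
  · rintro ⟨Y, rfl⟩ a b hb
    rw [LinearMap.mulRight_apply, mul_doubleNilJordanBlock_apply, if_neg (by omega)]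
  · intro hX
    refine ⟨of fun a e => if h : (e : ℕ) + 1 < 2 * k then X a ⟨e + 1, h⟩ else 0, ?_⟩
    ext a b
    rw [LinearMap.mulRight_apply, mul_doubleNilJordanBlock_apply]
    split_ifs with hb
    · rw [of_apply, dif_pos (by dsimp only; omega)]
      congr
      exact Nat.sub_add_cancel (Nat.one_le_iff_ne_zero.2 hb.1)
    · exact (hX a b (by omega)).symm

lemma finrank_quotient_range_mulRight_doubleNilJordanBlock (hk : 1 ≤ k) :
    Module.finrank F (Matrix (Fin (2 * k)) (Fin (2 * k)) F ⧸
      LinearMap.range (LinearMap.mulRight F (doubleNilJordanBlock F k))) = 4 * k := by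
  let c : Fin 2 → Fin (2 * k) := ![⟨0, by omega⟩, ⟨k, by omega⟩]
  have hc : Function.Injective c := by
    intro i j h
    fin_cases i <;> fin_cases j <;> simp [c, Fin.ext_iff] at h ⊢ <;> omega
  let f := LinearMap.funLeft F (Fin (2 * k) → F) c ∘ₗ
    (transposeLinearEquiv (Fin (2 * k)) (Fin (2 * k)) F F).toLinearMap
  have hf : Function.Surjective f :=
    (LinearMap.funLeft_surjective_of_injective F (Fin (2 * k) → F) c hc).comp
      (transposeLinearEquiv (Fin (2 * k)) (Fin (2 * k)) F F).surjective
  have hker : LinearMap.range (LinearMap.mulRight F (doubleNilJordanBlock F k)) =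
      LinearMap.ker f := by
    ext X
    rw [mem_range_mulRight_doubleNilJordanBlock_iff, LinearMap.mem_ker]
    have hf_apply : ∀ j a, f X j a = X a (c j) := fun _ _ => rfl
    simp only [funext_iff, hf_apply, Pi.zero_apply, Fin.forall_fin_two]
    constructor
    · intro h
      exact ⟨fun a => h a _ (.inl rfl), fun a => h a _ (.inr rfl)⟩
    · rintro ⟨h₀, hₖ⟩ a b (hb | hb)
      · exact (congrArg (X a) (Fin.ext hb)).trans (h₀ a)
      · exact (congrArg (X a) (Fin.ext hb)).trans (hₖ a)
  rw [hker, (f.quotKerEquivOfSurjective hf).finrank_eq, show Module.finrank F (Fin 2 → Fin (2 * k) → F) = _ from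
    Module.finrank_matrix F F (Fin 2) (Fin (2 * k)), Fintype.card_fin, Fintype.card_fin,
    Module.finrank_self]
  ring

end DoubleNilJordanBlock

theorem length_le_of_two_jordan_blocks_mem
    (F : Type*) [Field F] (k : ℕ) (hk : 1 ≤ k)
    (S : Finset (Matrix (Fin (2 * k)) (Fin (2 * k)) F))
    (hgen : IsGeneratingSystem F (S : Set (Matrix (Fin (2 * k)) (Fin (2 * k)) F)))
    (hmem : (Matrix.reindex (finSumFinEquiv.trans (finCongr (two_mul k).symm))
        (finSumFinEquiv.trans (finCongr (two_mul k).symm))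
        (Matrix.fromBlocks (nilJordanBlock F k) 0 0 (nilJordanBlock F k))) ∈ S) :
    2 * genLength F (S : Set (Matrix (Fin (2 * k)) (Fin (2 * k)) F)) ≤ 5 * (2 * k) - 4 := by
  have : Nonempty (Fin (2 * k)) := ⟨⟨0, by omega⟩⟩
  have htop := wordSpan_eq_top_of_pow_eq_zero hgen (b := doubleNilJordanBlock F k)
    (Finset.mem_coe.2 hmem) doubleNilJordanBlock_pow_self
  rw [finrank_quotient_range_mulRight_doubleNilJordanBlock hk] at htop
  have := genLength_le_of_wordSpan_eq_top htop
  omega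
end
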